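/- arXiv:1306.3532 — 2 statements merged into one kernel-verified Lean document; each statement's English description precedes it below -/
import Mathlib

section
/- Let X_free ⊆ [0,1]^d have measure μ(X_free) and fix θ > 0, γ > 0 with γ^d ζ_d / ((2+θ)^d μ(X_free)) > 1/d, where ζ_d is the volume of the unit d-ball. Let r_n = γ(log n / n)^{1/d}, and suppose M_n ≤ C/r_n for a constant C > 0. If n points are sampled i.i.d. uniformly on X_free, then the probability that at least one of M_n disjoint-or-not balls of radius r_n/(2+θ) contained in X_free is empty of samples tends to 0 as n → ∞. -/
/-!
Union bound over the `M n` balls. A ball of radius `ρ = r n / (2 + θ)` inside `Xfree` catches a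
given sample with probability `ζ ρ ^ d / μ(Xfree) = a log n / n`, where
`a = γ ^ d ζ / ((2 + θ) ^ d μ(Xfree))`, so by independence it stays empty with probability at most
`exp (-a log n) = n ^ (-a)`. As `M n ≤ C / r n = O(n ^ (1 / d))`, the failure probability is
`O(n ^ (1 / d - a))`, which tends to `0` because `a > 1 / d`.
-/

open MeasureTheory ProbabilityTheory Filter Topology Metric
open scoped ENNReal

theorem EuclideanSpace.isCompact_setOf_forall_mem {ι : Type*} [Fintype ι] {K : Set ℝ}
    (hK : IsCompact K) : IsCompact {x : EuclideanSpace ℝ ι | ∀ i, x i ∈ K} := by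
  have h := (EuclideanSpace.equiv ι ℝ).toHomeomorph.isCompact_preimage.2
    (isCompact_univ_pi fun _ => hK)
  convert h using 1
  ext x
  simp

theorem MeasureTheory.pdf.IsUniform.measure_preimage_of_subset {Ω E : Type*} [MeasurableSpace Ω]
    [MeasurableSpace E] {P : Measure Ω} {μ : Measure E} {X : Ω → E} {s A : Set E}
    (hu : pdf.IsUniform X s P μ) (hns : μ s ≠ 0) (hnt : μ s ≠ ∞) (hA : MeasurableSet A)
    (hAs : A ⊆ s) : P (X ⁻¹' A) = μ A / μ s := by
  rw [hu.measure_preimage hns hnt hA, Set.inter_eq_right.2 hAs]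

theorem MeasureTheory.pdf.IsUniform.measure_preimage_ball {Ω E : Type*} [MeasurableSpace Ω]
    [NormedAddCommGroup E] [NormedSpace ℝ E] [FiniteDimensional ℝ E] [MeasurableSpace E]
    [BorelSpace E] {P : Measure Ω} {μ : Measure E} [μ.IsAddHaarMeasure] {X : Ω → E} {s : Set E}
    (hu : pdf.IsUniform X s P μ) (hns : μ s ≠ 0) (hnt : μ s ≠ ∞) {x : E} {ρ : ℝ} (hρ : 0 < ρ)
    (hball : ball x ρ ⊆ s) :
    P (X ⁻¹' ball x ρ) =
      ENNReal.ofReal (ρ ^ Module.finrank ℝ E * (μ (ball 0 1)).toReal / (μ s).toReal) := by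
  rw [hu.measure_preimage_of_subset hns hnt measurableSet_ball hball,
    Measure.addHaar_ball_of_pos _ _ hρ, ENNReal.ofReal_div_of_pos (ENNReal.toReal_pos hns hnt),
    ENNReal.ofReal_mul (by positivity), ENNReal.ofReal_toReal hnt,
    ENNReal.ofReal_toReal measure_ball_lt_top.ne]

theorem ENNReal.one_sub_ofReal_pow_le_ofReal_exp (t : ℝ) (n : ℕ) :
    (1 - ENNReal.ofReal t) ^ n ≤ ENNReal.ofReal (Real.exp (-(n * t))) := by
  rcases le_or_gt t 1 with ht | ht
  · rcases le_or_gt t 0 with ht0 | ht0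
    · rw [ENNReal.ofReal_of_nonpos ht0, tsub_zero, one_pow]
      exact ENNReal.one_le_ofReal.2 (Real.one_le_exp (by nlinarith [n.cast_nonneg (α := ℝ)]))
    rw [← ENNReal.ofReal_one, ← ENNReal.ofReal_sub _ ht0.le, ← ENNReal.ofReal_pow (by linarith)]
    refine ENNReal.ofReal_le_ofReal ?_
    calc (1 - t) ^ n ≤ Real.exp (-t) ^ n :=
          pow_le_pow_left₀ (by linarith) (Real.one_sub_le_exp_neg t) n
      _ = Real.exp (-(n * t)) := by rw [← Real.exp_nat_mul, mul_neg]
  · rw [tsub_eq_zero_of_le (ENNReal.one_le_ofReal.2 ht.le)]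
    rcases n.eq_zero_or_pos with rfl | hn
    · simp
    · simp [zero_pow hn.ne']

theorem ENNReal.one_sub_ofReal_mul_log_div_pow_le (a : ℝ) {n : ℕ} (hn : 0 < n) :
    (1 - ENNReal.ofReal (a * Real.log n / n)) ^ n ≤ ENNReal.ofReal ((n : ℝ) ^ (-a)) := by
  have hn0 : (0 : ℝ) < n := by exact_mod_cast hn
  have hexp : Real.exp (-(n * (a * Real.log n / n))) = (n : ℝ) ^ (-a) := by
    rw [Real.rpow_def_of_pos hn0]
    field_simp
  exact hexp ▸ ENNReal.one_sub_ofReal_pow_le_ofReal_exp _ n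

section Sampling

variable {Ω α : Type*} [MeasurableSpace Ω] [MeasurableSpace α] {μ : Measure Ω}
  [IsProbabilityMeasure μ] {Y : ℕ → Ω → α}

theorem measure_forall_lt_notMem_le (hY : ∀ i, Measurable (Y i)) (hindep : iIndepFun Y μ)
    {B : Set α} (hB : MeasurableSet B) {q : ℝ≥0∞} (hq : ∀ i, q ≤ μ (Y i ⁻¹' B)) (n : ℕ) :
    μ {ω | ∀ i < n, Y i ω ∉ B} ≤ (1 - q) ^ n := by
  have hset : {ω | ∀ i < n, Y i ω ∉ B} = ⋂ i ∈ Finset.range n, Y i ⁻¹' Bᶜ := by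
    ext; simp
  rw [hset, hindep.meas_biInter fun i _ => ⟨Bᶜ, hB.compl, rfl⟩]
  calc ∏ i ∈ Finset.range n, μ (Y i ⁻¹' Bᶜ) ≤ ∏ _i ∈ Finset.range n, (1 - q) := by
        refine Finset.prod_le_prod' fun i _ => ?_
        rw [Set.preimage_compl, prob_compl_eq_one_sub (hY i hB)]
        exact tsub_le_tsub_left (hq i) 1
    _ = (1 - q) ^ n := by simp

theorem measure_exists_lt_forall_lt_notMem_le (hY : ∀ i, Measurable (Y i))
    (hindep : iIndepFun Y μ) {B : ℕ → Set α} (hB : ∀ m, MeasurableSet (B m)) {q : ℝ≥0∞}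
    {M : ℕ} (hq : ∀ m < M, ∀ i, q ≤ μ (Y i ⁻¹' B m)) (n : ℕ) :
    μ {ω | ∃ m < M, ∀ i < n, Y i ω ∉ B m} ≤ M * (1 - q) ^ n := by
  have hset : {ω | ∃ m < M, ∀ i < n, Y i ω ∉ B m}
      = ⋃ m ∈ Finset.range M, {ω | ∀ i < n, Y i ω ∉ B m} := by
    ext; simp
  calc μ {ω | ∃ m < M, ∀ i < n, Y i ω ∉ B m}
      ≤ ∑ m ∈ Finset.range M, μ {ω | ∀ i < n, Y i ω ∉ B m} := by
        rw [hset]; exact measure_biUnion_finset_le _ _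
    _ ≤ (Finset.range M).card • (1 - q) ^ n := Finset.sum_le_card_nsmul _ _ _ fun m hm =>
        measure_forall_lt_notMem_le hY hindep (hB m) (hq m (Finset.mem_range.1 hm)) n
    _ = M * (1 - q) ^ n := by rw [Finset.card_range, nsmul_eq_mul]

end Sampling

theorem tendsto_inv_rpow_log_div_mul_rpow_neg_atTop {s a : ℝ} (hs : 0 ≤ s) (hsa : s < a) :
    Tendsto (fun x : ℝ => ((Real.log x / x) ^ s)⁻¹ * x ^ (-a)) atTop (𝓝 0) := by
  have hlim : Tendsto (fun x : ℝ => x ^ (s - a)) atTop (𝓝 0) := by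
    simpa using tendsto_rpow_neg_atTop (sub_pos.2 hsa)
  refine tendsto_of_tendsto_of_tendsto_of_le_of_le' tendsto_const_nhds hlim ?_ ?_
  · filter_upwards [eventually_ge_atTop 1] with x hx
    have := Real.log_nonneg hx
    positivity
  · filter_upwards [eventually_ge_atTop (Real.exp 1)] with x hx
    have hx0 : 0 < x := (Real.exp_pos 1).trans_le hx
    have hlog : 1 ≤ Real.log x := (Real.le_log_iff_exp_le hx0).2 hx
    have hinv : (x ^ s)⁻¹ ≤ (Real.log x / x) ^ s := by
      rw [← Real.inv_rpow hx0.le]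
      exact Real.rpow_le_rpow (by positivity) (by rw [inv_eq_one_div]; gcongr) hs
    calc ((Real.log x / x) ^ s)⁻¹ * x ^ (-a) ≤ x ^ s * x ^ (-a) := by
          gcongr
          exact inv_le_of_inv_le₀ (by positivity) hinv
      _ = x ^ (s - a) := by rw [← Real.rpow_add hx0, sub_eq_add_neg]

theorem lemma3_loose_approximation_general {d : ℕ} (hd : 2 ≤ d)
    {Ω : Type*} [MeasureSpace Ω] [IsProbabilityMeasure (ℙ : Measure Ω)]
    (Xfree : Set (EuclideanSpace ℝ (Fin d)))
    (hXsub : Xfree ⊆ {x | ∀ i, x i ∈ Set.Icc (0 : ℝ) 1}) (hpos : 0 < volume Xfree)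
    (θ γ C : ℝ) (hθ : 0 < θ) (hγ : 0 < γ)
    (ζ : ℝ) (hζ : ζ = (volume (Metric.ball (0 : EuclideanSpace ℝ (Fin d)) 1)).toReal)
    (hexp : 1 / (d : ℝ) < γ ^ d * ζ / ((2 + θ) ^ d * (volume Xfree).toReal))
    (r : ℕ → ℝ) (hr : ∀ n : ℕ, r n = γ * (Real.log n / n) ^ ((1 : ℝ) / d))
    (M : ℕ → ℕ) (hM : ∀ n : ℕ, 2 ≤ n → (M n : ℝ) ≤ C / r n)
    (cB : ℕ → ℕ → EuclideanSpace ℝ (Fin d))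
    (hball : ∀ n : ℕ, 2 ≤ n → ∀ m < M n,
      Metric.ball (cB n m) (r n / (2 + θ)) ⊆ Xfree)
    (Y : ℕ → Ω → EuclideanSpace ℝ (Fin d))
    (hmeas : ∀ i, Measurable (Y i))
    (hindep : iIndepFun Y ℙ)
    (hunif : ∀ i, Measure.map (Y i) ℙ = (volume Xfree)⁻¹ • volume.restrict Xfree) :
    Filter.Tendsto
      (fun n : ℕ => ℙ {ω | ∃ m < M n, ∀ i < n, Y i ω ∉ Metric.ball (cB n m) (r n / (2 + θ))})
      Filter.atTop (nhds 0) := by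
  have hfin : volume Xfree ≠ ∞ := (measure_mono hXsub).trans_lt
    (EuclideanSpace.isCompact_setOf_forall_mem isCompact_Icc).measure_lt_top |>.ne
  set a := γ ^ d * ζ / ((2 + θ) ^ d * (volume Xfree).toReal)
  have hhit : ∀ n, 2 ≤ n → ∀ m < M n, ∀ i,
      ℙ (Y i ⁻¹' ball (cB n m) (r n / (2 + θ))) = ENNReal.ofReal (a * Real.log n / n) := by
    intro n hn m hm i
    have hlog : 0 < Real.log n / n := by
      have := Real.log_pos (by exact_mod_cast hn : (1 : ℝ) < n)
      positivity
    have hρd : (r n / (2 + θ)) ^ d = γ ^ d * (Real.log n / n) / (2 + θ) ^ d := by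
      rw [div_pow, hr, mul_pow, one_div, Real.rpow_inv_natCast_pow hlog.le (by omega)]
    have hu : pdf.IsUniform (Y i) Xfree ℙ volume := hunif i
    rw [hu.measure_preimage_ball hpos.ne' hfin (by rw [hr]; positivity) (hball n hn m hm),
      finrank_euclideanSpace_fin, ← hζ, hρd]
    congr 1
    simp only [a]
    field_simp
  have hbound : ∀ n, 2 ≤ n → ℙ {ω | ∃ m < M n, ∀ i < n, Y i ω ∉ ball (cB n m) (r n / (2 + θ))}
      ≤ ENNReal.ofReal (C / r n * (n : ℝ) ^ (-a)) := by
    intro n hn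
    calc _ ≤ M n * (1 - ENNReal.ofReal (a * Real.log n / n)) ^ n :=
          measure_exists_lt_forall_lt_notMem_le hmeas hindep (fun _ => measurableSet_ball)
            (fun m hm i => (hhit n hn m hm i).ge) n
      _ ≤ ENNReal.ofReal (C / r n) * ENNReal.ofReal ((n : ℝ) ^ (-a)) := by
          gcongr
          · exact (ENNReal.ofReal_natCast _).symm.trans_le (ENNReal.ofReal_le_ofReal (hM n hn))
          · exact ENNReal.one_sub_ofReal_mul_log_div_pow_le a (by omega)
      _ = ENNReal.ofReal (C / r n * (n : ℝ) ^ (-a)) := (ENNReal.ofReal_mul' (by positivity)).symm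
  have hlim : Tendsto (fun n : ℕ => C / r n * (n : ℝ) ^ (-a)) atTop (𝓝 0) := by
    have h := ((tendsto_inv_rpow_log_div_mul_rpow_neg_atTop (by positivity) hexp).comp
      tendsto_natCast_atTop_atTop).const_mul (C / γ)
    rw [mul_zero] at h
    refine h.congr fun n => ?_
    simp only [Function.comp_apply, hr]
    ring
  exact tendsto_of_tendsto_of_tendsto_of_le_of_le' tendsto_const_nhds
    (ENNReal.ofReal_zero ▸ ENNReal.tendsto_ofReal hlim) (Eventually.of_forall fun _ => zero_le)
    ((eventually_ge_atTop 2).mono hbound)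

/-- Lemma 3 (loose approximation to all of the path): with `r_n = γ(log n/n)^{1/d}`
and `γ^d ζ_d / ((2+θ)^d μ(Xfree)) > 1/d`, if `n` points are sampled i.i.d.
uniformly on `Xfree` and `M_n ≤ C/r_n` balls of radius `r_n/(2+θ)` are contained
in `Xfree`, then the probability that at least one ball contains no sample tends
to `0` as `n → ∞`. -/
theorem lemma3_loose_approximation {d : ℕ} (hd : 2 ≤ d)
    {Ω : Type*} [MeasureSpace Ω] [IsProbabilityMeasure (ℙ : Measure Ω)]
    (Xfree : Set (EuclideanSpace ℝ (Fin d))) (hXmeas : MeasurableSet Xfree)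
    (hXsub : Xfree ⊆ {x | ∀ i, x i ∈ Set.Icc (0 : ℝ) 1}) (hpos : 0 < volume Xfree)
    (θ γ C : ℝ) (hθ : 0 < θ) (hγ : 0 < γ) (hC : 0 < C)
    (ζ : ℝ) (hζ : ζ = (volume (Metric.ball (0 : EuclideanSpace ℝ (Fin d)) 1)).toReal)
    (hexp : 1 / (d : ℝ) < γ ^ d * ζ / ((2 + θ) ^ d * (volume Xfree).toReal))
    (r : ℕ → ℝ) (hr : ∀ n : ℕ, r n = γ * (Real.log n / n) ^ ((1 : ℝ) / d))
    (M : ℕ → ℕ) (hM : ∀ n : ℕ, 2 ≤ n → (M n : ℝ) ≤ C / r n)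
    (cB : ℕ → ℕ → EuclideanSpace ℝ (Fin d))
    (hball : ∀ n : ℕ, 2 ≤ n → ∀ m < M n,
      Metric.ball (cB n m) (r n / (2 + θ)) ⊆ Xfree)
    (Y : ℕ → Ω → EuclideanSpace ℝ (Fin d))
    (hmeas : ∀ i, Measurable (Y i))
    (hindep : iIndepFun Y ℙ)
    (hunif : ∀ i, Measure.map (Y i) ℙ = (volume Xfree)⁻¹ • volume.restrict Xfree) :
    Filter.Tendsto
      (fun n : ℕ => ℙ {ω | ∃ m < M n, ∀ i < n, Y i ω ∉ Metric.ball (cB n m) (r n / (2 + θ))})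
      Filter.atTop (nhds 0) :=
  lemma3_loose_approximation_general hd Xfree hXsub hpos θ γ C hθ hγ ζ hζ hexp r hr M hM cB hball Y
    hmeas hindep hunif
end

section
/- Let N_n be the number of points among n i.i.d. uniform samples on a region of measure μ ∈ (0,∞) ⊆ ℝ^d that fall within Euclidean distance r_n = γ(log n/n)^{1/d} of a fixed measurable set S whose r-neighborhood has measure at most C·r for all small r > 0. Then E[N_n] ∈ O(n^{1-1/d}(log n)^{1/d}), and in particular E[N_n]·log(n) ∈ O(n). -/
open MeasureTheory ProbabilityTheory Metric Classical

/-!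
By linearity of expectation, `E[N_n] = n · P(Y₀ ∈ S_{r_n}) ≤ n · C r_n / vol A` once `r_n`
is below the threshold of the neighbourhood bound, and `n · r_n = γ n^{1-1/d} (log n)^{1/d}`.
The second estimate follows because a power of `log n` is `o(n^{1/d})`.
-/

open Filter Asymptotics Topology
open scoped ENNReal

section Counting

variable {ι Ω E : Type*} [MeasurableSpace Ω] [MeasurableSpace E]

theorem lintegral_card_filter_mem (μ : Measure Ω) {Y : ι → Ω → E}
    (hY : ∀ i, Measurable (Y i)) {T : Set E} (hT : MeasurableSet T) (s : Finset ι) :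
    ∫⁻ ω, ((s.filter fun i => Y i ω ∈ T).card : ℝ≥0∞) ∂μ =
      ∑ i ∈ s, μ.map (Y i) T := by
  have hcard : ∀ ω, ((s.filter fun i => Y i ω ∈ T).card : ℝ≥0∞)
      = ∑ i ∈ s, (Y i ⁻¹' T).indicator 1 ω := by
    intro ω
    simp only [Finset.card_filter, Nat.cast_sum, Set.indicator_apply, Set.mem_preimage]
    congr! with i
    split_ifs <;> simp
  simp_rw [hcard]
  rw [lintegral_finsetSum _ fun i _ => measurable_one.indicator (hY i hT)]
  exact Finset.sum_congr rfl fun i _ => by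
    rw [lintegral_indicator_one (hY i hT), Measure.map_apply (hY i) hT]

theorem lintegral_card_filter_mem_of_map_eq (μ : Measure Ω) {ν : Measure E} {Y : ι → Ω → E}
    (hY : ∀ i, Measurable (Y i)) (hlaw : ∀ i, μ.map (Y i) = ν)
    {T : Set E} (hT : MeasurableSet T) (s : Finset ι) :
    ∫⁻ ω, ((s.filter fun i => Y i ω ∈ T).card : ℝ≥0∞) ∂μ = s.card * ν T := by
  simp [lintegral_card_filter_mem μ hY hT, hlaw]

theorem toReal_inv_smul_restrict_le {μ : Measure E} {A T : Set E} (hA : μ A ≠ 0) {b : ℝ}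
    (hb : 0 ≤ b) (hT : μ T ≤ ENNReal.ofReal b) :
    (((μ A)⁻¹ • μ.restrict A) T).toReal ≤ (μ A).toReal⁻¹ * b := by
  have hinv : (μ A)⁻¹ = ENNReal.ofReal (μ A).toReal⁻¹ := by
    rw [← ENNReal.toReal_inv, ENNReal.ofReal_toReal (ENNReal.inv_ne_top.mpr hA)]
  refine ENNReal.toReal_le_of_le_ofReal (by positivity) ?_
  rw [Measure.smul_apply, smul_eq_mul, ENNReal.ofReal_mul (by positivity), ← hinv]
  gcongr
  exact (Measure.restrict_le_self T).trans hT

theorem toReal_lintegral_card_filter_mem_le (μ : Measure Ω) {ν : Measure E} {A T : Set E}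
    {Y : ι → Ω → E} (hY : ∀ i, Measurable (Y i))
    (hlaw : ∀ i, μ.map (Y i) = (ν A)⁻¹ • ν.restrict A) (hA : ν A ≠ 0) (hT : MeasurableSet T)
    {b : ℝ} (hb : 0 ≤ b) (hTb : ν T ≤ ENNReal.ofReal b) (s : Finset ι) :
    (∫⁻ ω, ((s.filter fun i => Y i ω ∈ T).card : ℝ≥0∞) ∂μ).toReal ≤
      s.card * ((ν A).toReal⁻¹ * b) := by
  rw [lintegral_card_filter_mem_of_map_eq μ hY hlaw hT, ENNReal.toReal_mul,
    ENNReal.toReal_natCast]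
  gcongr
  exact toReal_inv_smul_restrict_le hA hb hTb

end Counting

section Asymptotics

theorem tendsto_log_div_self_rpow_atTop {p : ℝ} (hp : 0 < p) :
    Tendsto (fun x : ℝ => (Real.log x / x) ^ p) atTop (𝓝 0) := by
  have h := (Real.continuousAt_rpow_const 0 p (Or.inr hp.le)).tendsto.comp
    Real.isLittleO_log_id_atTop.tendsto_div_nhds_zero
  rwa [Real.zero_rpow hp.ne'] at h

theorem mul_div_rpow_eq {x y : ℝ} (hx : 0 < x) (hy : 0 ≤ y) (p : ℝ) :
    x * (y / x) ^ p = x ^ (1 - p) * y ^ p := by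
  rw [Real.div_rpow hy hx.le, Real.rpow_sub hx, Real.rpow_one]
  ring

theorem isBigO_rpow_mul_log_rpow_mul_log {p : ℝ} (hp : 0 < p) :
    (fun x : ℝ => x ^ (1 - p) * Real.log x ^ p * Real.log x) =O[atTop] fun x => x := by
  have hlog : (fun x : ℝ => x ^ (1 - p) * Real.log x ^ (p + 1))
      =o[atTop] fun x => x ^ (1 - p) * x ^ p :=
    (isBigO_refl _ _).mul_isLittleO (isLittleO_log_rpow_rpow_atTop _ hp)
  refine hlog.isBigO.congr' ?_ ?_
  · filter_upwards [eventually_gt_atTop (1 : ℝ)] with x hx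
    rw [Real.rpow_add_one (Real.log_pos hx).ne', mul_assoc]
  · filter_upwards [eventually_gt_atTop (0 : ℝ)] with x hx
    rw [← Real.rpow_add hx, sub_add_cancel, Real.rpow_one]

end Asymptotics

theorem expected_samples_near_obstacles_general {d : ℕ} (hd : 1 ≤ d)
    {Ω : Type*} [MeasureSpace Ω]
    (A : Set (EuclideanSpace ℝ (Fin d)))
    (hpos : 0 < volume A)
    (S : Set (EuclideanSpace ℝ (Fin d))) (C : ℝ) (hC : 0 < C)
    (hS : ∃ r₀ > (0 : ℝ), ∀ r ∈ Set.Ioc (0 : ℝ) r₀,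
      volume (thickening r S) ≤ ENNReal.ofReal (C * r))
    (γ : ℝ) (hγ : 0 < γ)
    (r : ℕ → ℝ) (hr : ∀ n : ℕ, r n = γ * (Real.log n / n) ^ ((1 : ℝ) / d))
    (Y : ℕ → Ω → EuclideanSpace ℝ (Fin d))
    (hmeas : ∀ i, Measurable (Y i))
    (hunif : ∀ i, Measure.map (Y i) ℙ = (volume A)⁻¹ • volume.restrict A)
    (N : ℕ → Ω → ℕ)
    (hN : ∀ n ω, N n ω = ((Finset.range n).filter fun i => Y i ω ∈ thickening (r n) S).card) :
    (fun n : ℕ => (∫⁻ ω, (N n ω : ENNReal) ∂ℙ).toReal) =O[Filter.atTop]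
        (fun n : ℕ => (n : ℝ) ^ (1 - (1 : ℝ) / d) * Real.log n ^ ((1 : ℝ) / d)) ∧
      (fun n : ℕ => (∫⁻ ω, (N n ω : ENNReal) ∂ℙ).toReal * Real.log n) =O[Filter.atTop]
        (fun n : ℕ => (n : ℝ)) := by
  have hp : (0 : ℝ) < 1 / d := by positivity
  obtain ⟨r₀, hr₀, hvol⟩ := hS
  have hr_lim : Tendsto r atTop (𝓝 0) := by
    simpa [funext hr] using
      ((tendsto_log_div_self_rpow_atTop hp).comp tendsto_natCast_atTop_atTop).const_mul γ
  have hbigO : (fun n : ℕ => (∫⁻ ω, (N n ω : ℝ≥0∞) ∂ℙ).toReal) =O[atTop]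
      fun n : ℕ => (n : ℝ) ^ (1 - (1 : ℝ) / d) * Real.log n ^ ((1 : ℝ) / d) := by
    refine IsBigO.of_bound ((volume A).toReal⁻¹ * C * γ) ?_
    filter_upwards [hr_lim.eventually (ge_mem_nhds hr₀), eventually_ge_atTop 2] with n hn hn2
    have hlog : 0 < Real.log n := Real.log_pos (by exact_mod_cast hn2)
    have hrn : 0 < r n := by rw [hr n]; exact mul_pos hγ (by positivity)
    rw [Real.norm_of_nonneg ENNReal.toReal_nonneg, Real.norm_of_nonneg (by positivity)]
    calc (∫⁻ ω, (N n ω : ℝ≥0∞) ∂ℙ).toReal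
        ≤ n * ((volume A).toReal⁻¹ * (C * r n)) := by
          simpa [hN] using toReal_lintegral_card_filter_mem_le ℙ hmeas hunif hpos.ne'
            isOpen_thickening.measurableSet (by positivity) (hvol _ ⟨hrn, hn⟩) (Finset.range n)
      _ = (volume A).toReal⁻¹ * C * γ * (n * (Real.log n / n) ^ ((1 : ℝ) / d)) := by
          rw [hr n]; ring
      _ = _ := by rw [mul_div_rpow_eq (by positivity) hlog.le]
  exact ⟨hbigO, (hbigO.mul (isBigO_refl _ _)).trans
    ((isBigO_rpow_mul_log_rpow_mul_log hp).comp_tendsto tendsto_natCast_atTop_atTop)⟩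

/-- Lemma 5 key estimate: the expected number of i.i.d. uniform samples (out of `n`)
falling within distance `r_n = γ(log n/n)^{1/d}` of a set `S` whose `r`-neighborhood
has measure at most `C·r` for small `r` is `O(n^{1-1/d}(log n)^{1/d})`; in
particular the expected number times `log n` is `O(n)`. -/
theorem expected_samples_near_obstacles {d : ℕ} (hd : 1 ≤ d)
    {Ω : Type*} [MeasureSpace Ω] [IsProbabilityMeasure (ℙ : Measure Ω)]
    (A : Set (EuclideanSpace ℝ (Fin d))) (hAmeas : MeasurableSet A)
    (hpos : 0 < volume A) (hfin : volume A < ⊤)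
    (S : Set (EuclideanSpace ℝ (Fin d))) (C : ℝ) (hC : 0 < C)
    (hS : ∃ r₀ > (0 : ℝ), ∀ r ∈ Set.Ioc (0 : ℝ) r₀,
      volume (thickening r S) ≤ ENNReal.ofReal (C * r))
    (γ : ℝ) (hγ : 0 < γ)
    (r : ℕ → ℝ) (hr : ∀ n : ℕ, r n = γ * (Real.log n / n) ^ ((1 : ℝ) / d))
    (Y : ℕ → Ω → EuclideanSpace ℝ (Fin d))
    (hmeas : ∀ i, Measurable (Y i))
    (hindep : iIndepFun Y ℙ)
    (hunif : ∀ i, Measure.map (Y i) ℙ = (volume A)⁻¹ • volume.restrict A)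
    (N : ℕ → Ω → ℕ)
    (hN : ∀ n ω, N n ω = ((Finset.range n).filter fun i => Y i ω ∈ thickening (r n) S).card) :
    (fun n : ℕ => (∫⁻ ω, (N n ω : ENNReal) ∂ℙ).toReal) =O[Filter.atTop]
        (fun n : ℕ => (n : ℝ) ^ (1 - (1 : ℝ) / d) * Real.log n ^ ((1 : ℝ) / d)) ∧
      (fun n : ℕ => (∫⁻ ω, (N n ω : ENNReal) ∂ℙ).toReal * Real.log n) =O[Filter.atTop]
        (fun n : ℕ => (n : ℝ)) :=
  expected_samples_near_obstacles_general hd A hpos S C hC hS γ hγ r hr Y hmeas hunif N hN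
end
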